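/- arXiv:2306.05815 — 4 statements merged into one kernel-verified Lean document; each statement's English description precedes it below -/
import Mathlib

section
/- Let U and K be real Hilbert spaces, let f : K → ℝ be a convex continuous function, let g : U → ℝ ∪ {+∞} be a proper, convex, lower semicontinuous function whose Fenchel conjugate g⋆ is finite-valued on all of U, and let Γ : U → K be a bounded linear operator with adjoint Γ♯. Then the following equality of infima holds in the extended reals: inf_{W ∈ U} ( g(W) − f(ΓW) ) = inf_{H ∈ K} ( f⋆(H) − g⋆(Γ♯H) ). -/
open scoped RealInnerProductSpace

/-- Fenchel conjugate of an extended-real-valued function on a real inner product space. -/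
noncomputable def fenchelConj {E : Type*} [NormedAddCommGroup E] [InnerProductSpace ℝ E]
    (h : E → EReal) (y : E) : EReal :=
  ⨆ x : E, ((⟪y, x⟫ : ℝ) : EReal) - h x

/-!
The inequality `≤` is weak duality: by the Fenchel–Young inequality
`f⋆ H ≥ ⟪H, Γ W⟫ - f (Γ W)` and `g⋆ (Γ♯ H) = sup_W (⟪H, Γ W⟫ - g W)`, every dual value dominates
the primal infimum. For `≥`, fix `W` and take a subgradient `H` of `f` at `Γ W`; it exists because
`f` is convex and continuous, by Hahn–Banach separation of `(Γ W, f (Γ W))` from the open strict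
epigraph of `f`. Then `f⋆ H = ⟪H, Γ W⟫ - f (Γ W)` exactly, while `g⋆ (Γ♯ H) ≥ ⟪H, Γ W⟫ - g W`,
so the dual value at `H` is at most `g W - f (Γ W)`. Finiteness of `g⋆` keeps the extended-real
subtractions from degenerating to `⊤ - ⊤`.
-/

theorem ConvexOn.exists_strongDual_sub_le {E : Type*} [TopologicalSpace E] [AddCommGroup E]
    [Module ℝ E] [IsTopologicalAddGroup E] [ContinuousSMul ℝ E] {f : E → ℝ}
    (hf : ConvexOn ℝ Set.univ f) (hfc : Continuous f) (x : E) :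
    ∃ φ : StrongDual ℝ E, ∀ y, φ y - f y ≤ φ x - f x := by
  have hconv : Convex ℝ {p : E × ℝ | p.1 ∈ Set.univ ∧ f p.1 < p.2} := hf.convex_strict_epigraph
  have hopen : IsOpen {p : E × ℝ | p.1 ∈ Set.univ ∧ f p.1 < p.2} := by
    simpa using isOpen_lt (hfc.comp continuous_fst) continuous_snd
  obtain ⟨ψ, hψ⟩ := geometric_hahn_banach_open_point hconv hopen (x := (x, f x)) (by simp)
  set L : StrongDual ℝ E := ψ.comp (.inl ℝ E ℝ)
  set c : ℝ := ψ (0, 1)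
  have hψ_apply (y : E) (t : ℝ) : ψ (y, t) = L y + t * c := by
    have hyt : (y, t) = (y, 0) + t • ((0 : E), (1 : ℝ)) := by simp
    rw [hyt, map_add, map_smul, smul_eq_mul]
    rfl
  have hψ_lt (y : E) (t : ℝ) (ht : f y < t) : L y + t * c < L x + f x * c := by
    simpa only [hψ_apply] using hψ (y, t) ⟨trivial, ht⟩
  have hc : c < 0 := by linarith [hψ_lt x (f x + 1) (by linarith)]
  -- let `t ↓ f y` in `hψ_lt`
  have hsupport (y : E) : L y + f y * c ≤ L x + f x * c := by
    refine le_of_forall_pos_lt_add fun ε hε => ?_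
    have := hψ_lt y (f y + ε / -c) (by linarith [div_pos hε (neg_pos.mpr hc)])
    rw [add_mul, div_mul_eq_mul_div, div_neg, mul_div_cancel_right₀ _ hc.ne] at this
    linarith
  have hnormalize (z : E) : ((-c)⁻¹ • L) z - f z = (-c)⁻¹ * (L z + f z * c) := by
    simp only [smul_apply, smul_eq_mul]
    field_simp [hc.ne]
    ring
  refine ⟨(-c)⁻¹ • L, fun y => ?_⟩
  rw [hnormalize, hnormalize]
  exact mul_le_mul_of_nonneg_left (hsupport y) (by simpa using hc.le)

theorem ConvexOn.exists_inner_sub_le {K : Type*} [NormedAddCommGroup K] [InnerProductSpace ℝ K]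
    [CompleteSpace K] {f : K → ℝ} (hf : ConvexOn ℝ Set.univ f) (hfc : Continuous f) (x : K) :
    ∃ H : K, ∀ y, ⟪H, y⟫ - f y ≤ ⟪H, x⟫ - f x := by
  obtain ⟨φ, hφ⟩ := hf.exists_strongDual_sub_le hfc x
  exact ⟨(InnerProductSpace.toDual ℝ K).symm φ, by simpa only [InnerProductSpace.toDual_symm_apply]⟩

namespace EReal

-- For `x = ⊥` or `x = ⊤` the left side is `⊥ + ⊤ = ⊥`.
theorem sub_coe_add_coe_sub_le (x : EReal) (p q : ℝ) :
    (x - p) + (q - x) ≤ ((q - p : ℝ) : EReal) := by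
  induction x with
  | bot => simp
  | top => simp
  | coe x => norm_cast; linarith

theorem coe_sub_sub_le_sub_coe {x r : EReal} {p q : ℝ} (hr : r ≠ ⊤) (h : (q : EReal) - x ≤ r) :
    ((q - p : ℝ) : EReal) - r ≤ x - p := by
  induction x with
  | bot => simp_all
  | top => simp
  | coe x =>
    induction r with
    | top => exact absurd rfl hr
    | bot => exact absurd h (by simp [← EReal.coe_sub])
    | coe r => norm_cast at h ⊢; linarith

end EReal

section FenchelConj

variable {E : Type*} [NormedAddCommGroup E] [InnerProductSpace ℝ E]

theorem inner_sub_le_fenchelConj (h : E → EReal) (y x : E) :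
    ((⟪y, x⟫ : ℝ) : EReal) - h x ≤ fenchelConj h y :=
  le_iSup (fun x => ((⟪y, x⟫ : ℝ) : EReal) - h x) x

theorem coe_inner_sub_le_fenchelConj (f : E → ℝ) (y x : E) :
    ((⟪y, x⟫ - f x : ℝ) : EReal) ≤ fenchelConj (fun x => (f x : EReal)) y := by
  simpa only [EReal.coe_sub] using inner_sub_le_fenchelConj (fun x => (f x : EReal)) y x

theorem fenchelConj_coe_ne_bot (f : E → ℝ) (y : E) : fenchelConj (fun x => (f x : EReal)) y ≠ ⊥ :=
  ne_bot_of_le_ne_bot (EReal.coe_ne_bot _) (coe_inner_sub_le_fenchelConj f y 0)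

theorem fenchelConj_coe_eq_of_forall_le {f : E → ℝ} {y x : E}
    (hx : ∀ z, ⟪y, z⟫ - f z ≤ ⟪y, x⟫ - f x) :
    fenchelConj (fun z => (f z : EReal)) y = ((⟪y, x⟫ - f x : ℝ) : EReal) :=
  le_antisymm
    (iSup_le fun z => by simpa only [EReal.coe_sub] using EReal.coe_le_coe_iff.2 (hx z))
    (coe_inner_sub_le_fenchelConj f y x)

end FenchelConj

section TolandDuality

variable {U K : Type*} [NormedAddCommGroup U] [InnerProductSpace ℝ U] [CompleteSpace U]
  [NormedAddCommGroup K] [InnerProductSpace ℝ K] [CompleteSpace K]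

theorem iInf_sub_le_fenchelConj_sub_fenchelConj_adjoint (f : K → ℝ) (g : U → EReal)
    (Γ : U →L[ℝ] K) (H : K) (hg : fenchelConj g (ContinuousLinearMap.adjoint Γ H) ≠ ⊤) :
    ⨅ W, g W - (f (Γ W) : EReal) ≤
      fenchelConj (fun x => (f x : EReal)) H - fenchelConj g (ContinuousLinearMap.adjoint Γ H) := by
  rw [EReal.le_sub_iff_add_le (.inr (fenchelConj_coe_ne_bot f H)) (.inl hg)]
  refine EReal.add_le_of_forall_lt fun a ha b hb => ?_
  obtain ⟨W, hW⟩ := lt_iSup_iff.mp hb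
  calc a + b ≤ (g W - f (Γ W)) + (⟪H, Γ W⟫ - g W) := by
        rw [← ContinuousLinearMap.adjoint_inner_left]
        exact add_le_add (ha.le.trans (iInf_le _ W)) hW.le
    _ ≤ ((⟪H, Γ W⟫ - f (Γ W) : ℝ) : EReal) := EReal.sub_coe_add_coe_sub_le _ _ _
    _ ≤ fenchelConj (fun x => (f x : EReal)) H := coe_inner_sub_le_fenchelConj f H (Γ W)

theorem fenchelConj_sub_fenchelConj_adjoint_le_of_forall_le {f : K → ℝ} (g : U → EReal)
    (Γ : U →L[ℝ] K) {H : K} {W : U} (hH : ∀ z, ⟪H, z⟫ - f z ≤ ⟪H, Γ W⟫ - f (Γ W))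
    (hg : fenchelConj g (ContinuousLinearMap.adjoint Γ H) ≠ ⊤) :
    fenchelConj (fun x => (f x : EReal)) H - fenchelConj g (ContinuousLinearMap.adjoint Γ H) ≤
      g W - (f (Γ W) : EReal) := by
  rw [fenchelConj_coe_eq_of_forall_le hH]
  refine EReal.coe_sub_sub_le_sub_coe hg ?_
  rw [← ContinuousLinearMap.adjoint_inner_left]
  exact inner_sub_le_fenchelConj g _ W

end TolandDuality

theorem dc_duality_general
    {U K : Type*} [NormedAddCommGroup U] [InnerProductSpace ℝ U] [CompleteSpace U]
    [NormedAddCommGroup K] [InnerProductSpace ℝ K] [CompleteSpace K]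
    (f : K → ℝ) (hf_convex : ConvexOn ℝ Set.univ f) (hf_cont : Continuous f)
    (g : U → EReal)
    (hgstar_finite : ∀ y : U, ∃ r : ℝ, fenchelConj g y = (r : EReal))
    (Γ : U →L[ℝ] K) :
    (⨅ W : U, g W - ((f (Γ W) : ℝ) : EReal)) =
      ⨅ H : K, fenchelConj (fun x : K => ((f x : ℝ) : EReal)) H
        - fenchelConj g ((ContinuousLinearMap.adjoint Γ) H) := by
  have hg (y : U) : fenchelConj g y ≠ ⊤ := by
    obtain ⟨r, hr⟩ := hgstar_finite y
    exact hr ▸ EReal.coe_ne_top r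
  refine le_antisymm
    (le_iInf fun H => iInf_sub_le_fenchelConj_sub_fenchelConj_adjoint f g Γ H (hg _))
    (le_iInf fun W => ?_)
  obtain ⟨H, hH⟩ := hf_convex.exists_inner_sub_le hf_cont (Γ W)
  exact (iInf_le _ H).trans (fenchelConj_sub_fenchelConj_adjoint_le_of_forall_le g Γ hH (hg _))

/-- Dual of a difference of convex functions (Toland duality):
`inf_W (g W − f (Γ W)) = inf_H (f⋆ H − g⋆ (Γ♯ H))`. -/
theorem dc_duality
    {U K : Type*} [NormedAddCommGroup U] [InnerProductSpace ℝ U] [CompleteSpace U]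
    [NormedAddCommGroup K] [InnerProductSpace ℝ K] [CompleteSpace K]
    (f : K → ℝ) (hf_convex : ConvexOn ℝ Set.univ f) (hf_cont : Continuous f)
    (g : U → EReal)
    (hg_proper_ne_top : ∃ x : U, g x ≠ ⊤)
    (hg_proper_ne_bot : ∀ x : U, g x ≠ ⊥)
    (hg_convex : ∀ x y : U, ∀ a b : ℝ, 0 ≤ a → 0 ≤ b → a + b = 1 →
      g (a • x + b • y) ≤ (a : EReal) * g x + (b : EReal) * g y)
    (hg_lsc : LowerSemicontinuous g)
    (hgstar_finite : ∀ y : U, ∃ r : ℝ, fenchelConj g y = (r : EReal))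
    (Γ : U →L[ℝ] K) :
    (⨅ W : U, g W - ((f (Γ W) : ℝ) : EReal)) =
      ⨅ H : K, fenchelConj (fun x : K => ((f x : ℝ) : EReal)) H
        - fenchelConj g ((ContinuousLinearMap.adjoint Γ) H) :=
  dc_duality_general f hf_convex hf_cont g hgstar_finite Γ
end

section
/- Let 𝓗 be a real Hilbert space, v₁,…,vₙ ∈ 𝓗 with positive definite Gram matrix G ∈ ℝ^{n×n}, G_{ij} = ⟨vᵢ, vⱼ⟩, and let H ∈ ℝ^{n×s}. Then the supremum of Σ_{j=1}^s ⟨ Σ_{i=1}^n H_{ij} vᵢ , wⱼ ⟩ over all W = (w₁,…,wₛ) ∈ 𝓗ˢ with 𝒢(W) ⪯ I_s equals the supremum of Tr(Aᵀ G H) over all A ∈ ℝ^{n×s} with Aᵀ G A ⪯ I_s; that is, the maximization over directions in 𝓗 reduces to a maximization over coefficient matrices A, where W corresponds to wⱼ = Σ_{i=1}^n A_{ij} vᵢ. -/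
open scoped RealInnerProductSpace Matrix

/-!
Orthogonal projection `P` onto `span {vᵢ}` is a contraction, so `𝒢(P ∘ W) ⪯ 𝒢(W) ⪯ Iₛ`, and it
leaves the objective unchanged because each `Σᵢ H_{ij} vᵢ` lies in the span. The projected
tuple has the form `wⱼ = Σᵢ A_{ij} vᵢ`, for which `𝒢(W) = Aᵀ G A` and the objective is
`Tr(Aᵀ G H)`; conversely every such `A` yields an admissible `W`. Hence both suprema are taken
over the same set of values.
-/

/-- The Gram matrix `𝒢(W)` of a tuple `W = (w₁, …, wₛ)` of vectors of a real Hilbert space. -/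
noncomputable def gram {𝓗 : Type*} [NormedAddCommGroup 𝓗] [InnerProductSpace ℝ 𝓗]
    {s : ℕ} (W : Fin s → 𝓗) : Matrix (Fin s) (Fin s) ℝ :=
  Matrix.of fun i j => ⟪W i, W j⟫

section
variable {𝓗 : Type*} [NormedAddCommGroup 𝓗] [InnerProductSpace ℝ 𝓗] {n s : ℕ}

theorem gram_sum_smul (v : Fin n → 𝓗) (A : Matrix (Fin n) (Fin s) ℝ) :
    gram (fun j => ∑ i, A i j • v i) = Aᵀ * gram v * A := by
  ext j k
  simp only [gram, Matrix.of_apply, Matrix.mul_apply, Matrix.transpose_apply, inner_sum,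
    sum_inner, real_inner_smul_left, real_inner_smul_right, Finset.sum_mul]
  exact Finset.sum_congr rfl fun _ _ => Finset.sum_congr rfl fun _ _ => by ring

theorem sum_inner_sum_smul_eq_trace (v : Fin n → 𝓗) (A H : Matrix (Fin n) (Fin s) ℝ) :
    ∑ j, ⟪∑ i, H i j • v i, ∑ i, A i j • v i⟫ = (Aᵀ * gram v * H).trace := by
  simp only [Matrix.trace, Matrix.diag, Matrix.mul_apply, Matrix.transpose_apply, gram,
    Matrix.of_apply, inner_sum, sum_inner, real_inner_smul_left, real_inner_smul_right,
    Finset.sum_mul]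
  refine Finset.sum_congr rfl fun _ _ => Finset.sum_comm.trans <| Finset.sum_congr rfl
    fun _ _ => Finset.sum_congr rfl fun _ _ => ?_
  rw [real_inner_comm]; ring

theorem gram_eq_matrix_gram (W : Fin s → 𝓗) : gram W = Matrix.gram ℝ W := rfl

-- `𝒢(f ∘ W) ⪯ ‖f‖² 𝒢(W) ⪯ 𝒢(W) ⪯ Iₛ`
theorem posSemidef_one_sub_gram_comp {W : Fin s → 𝓗} (hW : (1 - gram W).PosSemidef)
    (f : 𝓗 →L[ℝ] 𝓗) (hf : ‖f‖ ≤ 1) : (1 - gram (f ∘ W)).PosSemidef := by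
  rw [gram_eq_matrix_gram] at hW ⊢
  have hshrink : (1 - ‖f‖ ^ 2 : ℝ) • Matrix.gram ℝ W + (‖f‖ ^ 2 • Matrix.gram ℝ W
      - Matrix.gram ℝ (f ∘ W)) = Matrix.gram ℝ W - Matrix.gram ℝ (f ∘ W) := by module
  have := hW.add <| ((Matrix.posSemidef_gram ℝ W).smul (a := 1 - ‖f‖ ^ 2)
    (by nlinarith [norm_nonneg f])).add (Matrix.posSemidef_opNorm_smul_gram_sub_gram W f)
  rwa [hshrink, sub_add_sub_cancel] at this

theorem exists_coeff_of_posSemidef_one_sub_gram (v : Fin n → 𝓗) (H : Matrix (Fin n) (Fin s) ℝ)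
    {W : Fin s → 𝓗} (hW : (1 - gram W).PosSemidef) :
    ∃ A : Matrix (Fin n) (Fin s) ℝ, (1 - Aᵀ * gram v * A).PosSemidef ∧
      (Aᵀ * gram v * H).trace = ∑ j, ⟪∑ i, H i j • v i, W j⟫ := by
  set K := Submodule.span ℝ (Set.range v)
  have : FiniteDimensional ℝ K := FiniteDimensional.span_of_finite ℝ (Set.finite_range v)
  have : CompleteSpace K := FiniteDimensional.complete ℝ K
  choose A hA using fun j =>
    (Submodule.mem_span_range_iff_exists_fun ℝ).mp (K.starProjection_apply_mem (W j))
  refine ⟨(Matrix.of A)ᵀ, ?_, ?_⟩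
  · have hAW : (fun j => ∑ i, (Matrix.of A)ᵀ i j • v i) = K.starProjection ∘ W := funext hA
    rw [← gram_sum_smul, hAW]
    exact posSemidef_one_sub_gram_comp hW K.starProjection K.starProjection_norm_le
  · rw [← sum_inner_sum_smul_eq_trace]
    refine Finset.sum_congr rfl fun j _ => ?_
    have hHK : ∑ i, H i j • v i ∈ K := (Submodule.mem_span_range_iff_exists_fun ℝ).mpr ⟨_, rfl⟩
    simp only [Matrix.transpose_apply, Matrix.of_apply, hA]
    rw [← K.inner_starProjection_left_eq_right, K.starProjection_eq_self_iff.mpr hHK]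

end

theorem sup_hilbert_eq_sup_coeff_general
    {𝓗 : Type*} [NormedAddCommGroup 𝓗] [InnerProductSpace ℝ 𝓗]
    {n s : ℕ} (v : Fin n → 𝓗)
    (G : Matrix (Fin n) (Fin n) ℝ) (hGdef : G = Matrix.of fun i j => ⟪v i, v j⟫)
    (H : Matrix (Fin n) (Fin s) ℝ) :
    (⨆ W : {W : Fin s → 𝓗 // ((1 : Matrix (Fin s) (Fin s) ℝ) - gram W).PosSemidef},
        ∑ j : Fin s, ⟪∑ i : Fin n, H i j • v i, (W : Fin s → 𝓗) j⟫) =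
    (⨆ A : {A : Matrix (Fin n) (Fin s) ℝ //
        ((1 : Matrix (Fin s) (Fin s) ℝ)
          - (A : Matrix (Fin n) (Fin s) ℝ)ᵀ * G * (A : Matrix (Fin n) (Fin s) ℝ)).PosSemidef},
      ((A : Matrix (Fin n) (Fin s) ℝ)ᵀ * G * H).trace) := by
  obtain rfl : G = gram v := hGdef
  refine congrArg sSup (Set.Subset.antisymm ?_ ?_)
  · rintro _ ⟨⟨W, hW⟩, rfl⟩
    obtain ⟨A, hA, hvalue⟩ := exists_coeff_of_posSemidef_one_sub_gram v H hW
    exact ⟨⟨A, hA⟩, hvalue⟩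
  · rintro _ ⟨⟨A, hA⟩, rfl⟩
    refine ⟨⟨fun j => ∑ i, A i j • v i, ?_⟩, sum_inner_sum_smul_eq_trace v A H⟩
    rwa [gram_sum_smul]

/-- For `G` the (positive definite) Gram matrix of `v₁, …, vₙ`, the maximization of
`Σⱼ ⟨Σᵢ H_{ij} vᵢ, wⱼ⟩` over `{W : 𝒢(W) ⪯ Iₛ}` reduces to the maximization of
`Tr(Aᵀ G H)` over coefficient matrices `A` with `Aᵀ G A ⪯ Iₛ`. -/
theorem sup_hilbert_eq_sup_coeff
    {𝓗 : Type*} [NormedAddCommGroup 𝓗] [InnerProductSpace ℝ 𝓗]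
    {n s : ℕ} (v : Fin n → 𝓗)
    (G : Matrix (Fin n) (Fin n) ℝ) (hGdef : G = Matrix.of fun i j => ⟪v i, v j⟫)
    (hG : G.PosDef) (H : Matrix (Fin n) (Fin s) ℝ) :
    (⨆ W : {W : Fin s → 𝓗 // ((1 : Matrix (Fin s) (Fin s) ℝ) - gram W).PosSemidef},
        ∑ j : Fin s, ⟪∑ i : Fin n, H i j • v i, (W : Fin s → 𝓗) j⟫) =
    (⨆ A : {A : Matrix (Fin n) (Fin s) ℝ //
        ((1 : Matrix (Fin s) (Fin s) ℝ)
          - (A : Matrix (Fin n) (Fin s) ℝ)ᵀ * G * (A : Matrix (Fin n) (Fin s) ℝ)).PosSemidef},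
      ((A : Matrix (Fin n) (Fin s) ℝ)ᵀ * G * H).trace) :=
  sup_hilbert_eq_sup_coeff_general v G hGdef H
end

section
/- Let G ∈ ℝ^{n×n} be symmetric positive definite and define π : ℝ^{n×s} → ℝ by π(H) = Tr √(Hᵀ G H). If H ∈ ℝ^{n×s} is such that all eigenvalues of Hᵀ G H are positive (i.e. Hᵀ G H is positive definite), then π is Fréchet differentiable at H and its gradient (with respect to the Frobenius inner product) is ∇π(H) = G H (Hᵀ G H)^{−1/2}; equivalently, ∇π(H) = G H Uᵀ diag(1/√λ(Hᵀ G H)) U for any orthogonal U ∈ ℝ^{s×s} with Hᵀ G H = Uᵀ diag(λ(Hᵀ G H)) U. In other words, the Fréchet derivative of π at H applied to M ∈ ℝ^{n×s} equals Tr( Mᵀ G H (Hᵀ G H)^{−1/2} ). -/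
open scoped Matrix

attribute [local instance] Matrix.frobeniusNormedAddCommGroup Matrix.frobeniusNormedSpace

lemma transposeMulMul_posSemidef {n s : ℕ} {G : Matrix (Fin n) (Fin n) ℝ}
    (hG : G.PosSemidef) (H : Matrix (Fin n) (Fin s) ℝ) : (Hᵀ * G * H).PosSemidef := by
  simpa [Matrix.conjTranspose_eq_transpose_of_trivial] using hG.conjTranspose_mul_mul_same H

namespace Matrix.PosSemidef

open scoped ComplexOrder

/-- The square root of a positive semidefinite matrix, as defined in the older Mathlib. -/
noncomputable def sqrt {n 𝕜 : Type*} [Fintype n] [DecidableEq n] [RCLike 𝕜] {A : Matrix n n 𝕜}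
    (hA : A.PosSemidef) : Matrix n n 𝕜 :=
  hA.1.eigenvectorUnitary.1 * Matrix.diagonal ((↑) ∘ (√·) ∘ hA.1.eigenvalues) *
    (star hA.1.eigenvectorUnitary : Matrix n n 𝕜)

end Matrix.PosSemidef

/-- The objective `π(H) = Tr √(Hᵀ G H)` for a positive semidefinite matrix `G`. -/
noncomputable def piObj {n s : ℕ} (G : Matrix (Fin n) (Fin n) ℝ) (hG : G.PosSemidef) :
    Matrix (Fin n) (Fin s) ℝ → ℝ :=
  fun H => (transposeMulMul_posSemidef hG H).sqrt.trace

/-!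
Write `S = √(Hᵀ G H)` and pick `μ > 0` with `S - μ • 1` positive semidefinite. If `T - μ • 1` and
`S'` are positive semidefinite, then `Tr (Dᵀ (D T + S' D)) ≥ μ ‖D‖²`, so `μ ‖D‖ ≤ ‖D T + S' D‖`.
Hence the derivative `E ↦ S E + E S` of squaring at `S` is injective, and the inverse function
theorem yields a differentiable local inverse of squaring near `Hᵀ G H`. The same estimate gives
`μ ‖√Y - S‖ ≤ ‖Y - Hᵀ G H‖`, so for `H'` near `H` the root `√(H'ᵀ G H')` stays where that local
inverse inverts squaring, and hence equals it. Finally `S F + F S = Z` implies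
`2 Tr F = Tr (S⁻¹ Z)`, and `Z = Hᵀ G M + Mᵀ G H` turns this into `2 Tr (Mᵀ G H S⁻¹)`.
-/

namespace Matrix

open scoped ComplexOrder

section RCLike

variable {m 𝕜 : Type*} [Fintype m] [DecidableEq m] [RCLike 𝕜] {A : Matrix m m 𝕜}

theorem PosSemidef.sqrt_eq_conjStarAlgAut (hA : A.PosSemidef) :
    hA.sqrt = Unitary.conjStarAlgAut 𝕜 _ hA.1.eigenvectorUnitary
      (diagonal ((↑) ∘ (√·) ∘ hA.1.eigenvalues)) :=
  rfl

theorem PosSemidef.sqrt_mul_self (hA : A.PosSemidef) : hA.sqrt * hA.sqrt = A := by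
  conv_rhs => rw [hA.1.spectral_theorem]
  rw [hA.sqrt_eq_conjStarAlgAut, ← map_mul, diagonal_mul_diagonal]
  congr 2
  funext i
  simp [← RCLike.ofReal_mul, Real.mul_self_sqrt (hA.eigenvalues_nonneg i)]

theorem PosSemidef.posSemidef_sqrt (hA : A.PosSemidef) : hA.sqrt.PosSemidef := by
  rw [PosSemidef.sqrt, IsUnit.posSemidef_star_right_conjugate_iff Unitary.isUnit_coe,
    posSemidef_diagonal_iff]
  exact fun i => RCLike.ofReal_nonneg.mpr (Real.sqrt_nonneg _)

theorem PosSemidef.trace_mul_nonneg {B : Matrix m m 𝕜} (hA : A.PosSemidef) (hB : B.PosSemidef) :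
    0 ≤ (A * B).trace := by
  have hR := hA.mul_mul_conjTranspose_same hB.sqrt
  rw [hB.posSemidef_sqrt.1.eq] at hR
  rw [← hB.sqrt_mul_self, ← Matrix.mul_assoc, trace_mul_comm, ← Matrix.mul_assoc]
  exact hR.trace_nonneg

theorem PosDef.posDef_sqrt (hA : A.PosDef) : hA.posSemidef.sqrt.PosDef := by
  rw [hA.posSemidef.posSemidef_sqrt.posDef_iff_isUnit]
  have h := hA.isUnit
  rw [← hA.posSemidef.sqrt_mul_self] at h
  exact isUnit_of_mul_isUnit_left h

theorem PosDef.exists_posSemidef_sub_smul_one (hA : A.PosDef) :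
    ∃ μ : ℝ, 0 < μ ∧ (A - (μ : 𝕜) • 1).PosSemidef := by
  obtain ⟨μ, hμ, hle⟩ : ∃ μ : ℝ, 0 < μ ∧ ∀ i, μ ≤ hA.1.eigenvalues i := by
    cases isEmpty_or_nonempty m
    · exact ⟨1, one_pos, isEmptyElim⟩
    · obtain ⟨i₀, hi₀⟩ := Finite.exists_min hA.1.eigenvalues
      exact ⟨_, hA.eigenvalues_pos i₀, hi₀⟩
  refine ⟨μ, hμ, ?_⟩
  rw [hA.1.spectral_theorem, ← map_one (Unitary.conjStarAlgAut 𝕜 _ hA.1.eigenvectorUnitary),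
    ← map_smul, ← map_sub, Unitary.conjStarAlgAut_apply,
    IsUnit.posSemidef_star_right_conjugate_iff Unitary.isUnit_coe, smul_one_eq_diagonal,
    diagonal_sub, posSemidef_diagonal_iff]
  intro i
  rw [Function.comp_apply, ← RCLike.ofReal_sub, RCLike.ofReal_nonneg, sub_nonneg]
  exact hle i

end RCLike

section Frobenius

variable {m k : Type*} [Fintype m] [Fintype k]

theorem trace_transpose_mul_eq_sum (D B : Matrix m k ℝ) :
    (Dᵀ * B).trace = ∑ p : m × k, D p.1 p.2 * B p.1 p.2 := by
  simp only [trace, diag, mul_apply, transpose_apply, Fintype.sum_prod_type]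
  exact Finset.sum_comm

theorem frobenius_norm_eq_sqrt_sum (D : Matrix m k ℝ) :
    ‖D‖ = √(∑ p : m × k, D p.1 p.2 ^ 2) := by
  simp [frobenius_norm_def, Real.sqrt_eq_rpow, Fintype.sum_prod_type]

theorem frobenius_norm_sq (D : Matrix m k ℝ) : ‖D‖ ^ 2 = (Dᵀ * D).trace := by
  rw [frobenius_norm_eq_sqrt_sum, Real.sq_sqrt (by positivity), trace_transpose_mul_eq_sum]
  simp only [sq]

theorem trace_transpose_mul_le (D B : Matrix m k ℝ) : (Dᵀ * B).trace ≤ ‖D‖ * ‖B‖ := by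
  rw [trace_transpose_mul_eq_sum, frobenius_norm_eq_sqrt_sum, frobenius_norm_eq_sqrt_sum]
  exact Real.sum_mul_le_sqrt_mul_sqrt _ _ _

theorem mul_norm_le_norm_mul_add_mul [DecidableEq k] {T : Matrix k k ℝ} {S : Matrix m m ℝ}
    {μ : ℝ} (hT : (T - μ • 1).PosSemidef) (hS : S.PosSemidef) (D : Matrix m k ℝ) :
    μ * ‖D‖ ≤ ‖D * T + S * D‖ := by
  have hDD : (Dᵀ * D).PosSemidef := by simpa using posSemidef_conjTranspose_mul_self D
  have hDSD : (Dᵀ * S * D).PosSemidef := by simpa using hS.conjTranspose_mul_mul_same D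
  have key : μ * ‖D‖ ^ 2 ≤ ‖D‖ * ‖D * T + S * D‖ := calc
    μ * ‖D‖ ^ 2 ≤ μ * ‖D‖ ^ 2 + (Dᵀ * D * (T - μ • 1)).trace + (Dᵀ * S * D).trace := by
        linarith [hDD.trace_mul_nonneg hT, hDSD.trace_nonneg]
    _ = (Dᵀ * (D * T + S * D)).trace := by
        rw [frobenius_norm_sq, Matrix.mul_sub, Matrix.mul_smul, Matrix.mul_one, Matrix.mul_add,
          trace_sub, trace_add, trace_smul, smul_eq_mul, Matrix.mul_assoc, Matrix.mul_assoc]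
        ring
    _ ≤ ‖D‖ * ‖D * T + S * D‖ := trace_transpose_mul_le _ _
  rcases (norm_nonneg D).eq_or_lt with h | h
  · rw [← h, mul_zero]
    exact norm_nonneg _
  · nlinarith

theorem PosSemidef.mul_norm_sqrt_sub_sqrt_le [DecidableEq m] {X Y : Matrix m m ℝ}
    (hX : X.PosSemidef) (hY : Y.PosSemidef) {μ : ℝ} (hμ : (hX.sqrt - μ • 1).PosSemidef) :
    μ * ‖hY.sqrt - hX.sqrt‖ ≤ ‖Y - X‖ := by
  have h := mul_norm_le_norm_mul_add_mul hμ hY.posSemidef_sqrt (hY.sqrt - hX.sqrt)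
  rwa [Matrix.sub_mul, Matrix.mul_sub, hX.sqrt_mul_self, hY.sqrt_mul_self,
    sub_add_sub_cancel'] at h

end Frobenius

section CommRing

variable {n R : Type*} [Fintype n] [CommRing R]

theorem two_mul_trace_eq_trace_inv_mul [DecidableEq n] {S : Matrix n n R} (hS : IsUnit S)
    (F : Matrix n n R) : 2 * F.trace = (S⁻¹ * (S * F + F * S)).trace := by
  have hdet := (isUnit_iff_isUnit_det S).mp hS
  rw [Matrix.mul_add, nonsing_inv_mul_cancel_left _ _ hdet, trace_add, trace_mul_comm,
    mul_nonsing_inv_cancel_right _ _ hdet, two_mul]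

theorem trace_mul_transpose_add_self {W : Matrix n n R} (hW : Wᵀ = W) (A : Matrix n n R) :
    (W * (Aᵀ + A)).trace = 2 * (W * A).trace := by
  rw [Matrix.mul_add, trace_add, ← trace_transpose, transpose_mul, transpose_transpose, hW,
    trace_mul_comm, two_mul]

end CommRing

end Matrix

attribute [local instance] Matrix.frobeniusNormedRing Matrix.frobeniusNormedAlgebra

namespace Matrix.PosDef

variable {m : Type*} [Fintype m] [DecidableEq m] {S : Matrix m m ℝ}

theorem mulLeft_add_mulRight_injective (hS : S.PosDef) :
    Function.Injective (LinearMap.mulLeft ℝ S + LinearMap.mulRight ℝ S) := by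
  rw [← LinearMap.ker_eq_bot, LinearMap.ker_eq_bot']
  intro E hE
  obtain ⟨μ, hμ, hsub⟩ := hS.exists_posSemidef_sub_smul_one (𝕜 := ℝ)
  have h := mul_norm_le_norm_mul_add_mul hsub hS.posSemidef E
  rw [add_comm] at h
  simp only [LinearMap.add_apply, LinearMap.mulLeft_apply, LinearMap.mulRight_apply] at hE
  rw [hE, norm_zero] at h
  exact norm_le_zero_iff.mp (nonpos_of_mul_nonpos_right h hμ)

noncomputable def lyapunovEquiv (hS : S.PosDef) : Matrix m m ℝ ≃L[ℝ] Matrix m m ℝ :=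
  (LinearEquiv.ofInjectiveEndo _ hS.mulLeft_add_mulRight_injective).toContinuousLinearEquiv

theorem lyapunovEquiv_apply (hS : S.PosDef) (E : Matrix m m ℝ) :
    hS.lyapunovEquiv E = S * E + E * S :=
  rfl

theorem hasStrictFDerivAt_mul_self (hS : S.PosDef) :
    HasStrictFDerivAt (fun X : Matrix m m ℝ => X * X)
      (hS.lyapunovEquiv : Matrix m m ℝ →L[ℝ] Matrix m m ℝ) S := by
  refine ((hasStrictFDerivAt_id S).mul' (hasStrictFDerivAt_id S)).congr_fderiv ?_
  ext E : 1
  exact (lyapunovEquiv_apply hS E).symm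

theorem two_mul_trace_lyapunovEquiv_symm (hS : S.PosDef) (Z : Matrix m m ℝ) :
    2 * (hS.lyapunovEquiv.symm Z).trace = (S⁻¹ * Z).trace := by
  conv_rhs => rw [← hS.lyapunovEquiv.apply_symm_apply Z, lyapunovEquiv_apply]
  exact two_mul_trace_eq_trace_inv_mul hS.isUnit _

end Matrix.PosDef

open Filter Topology in
theorem HasFDerivAt.posSemidef_sqrt {m E : Type*} [Fintype m] [DecidableEq m]
    [NormedAddCommGroup E] [NormedSpace ℝ E] {q : E → Matrix m m ℝ} (hq : ∀ x, (q x).PosSemidef)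
    {q' : E →L[ℝ] Matrix m m ℝ} {x : E} (hqx : HasFDerivAt q q' x) (hx : (q x).PosDef) :
    HasFDerivAt (fun y => (hq y).sqrt)
      ((hx.posDef_sqrt.lyapunovEquiv.symm : Matrix m m ℝ →L[ℝ] Matrix m m ℝ).comp q') x := by
  set S₀ := (hq x).sqrt
  have hS₀ : S₀.PosDef := hx.posDef_sqrt
  have hsq := hS₀.hasStrictFDerivAt_mul_self
  set f := hsq.localInverse _ _ _
  have hf : HasFDerivAt f (hS₀.lyapunovEquiv.symm : Matrix m m ℝ →L[ℝ] Matrix m m ℝ) (q x) := by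
    have h := hsq.to_localInverse.hasFDerivAt
    rwa [(hq x).sqrt_mul_self] at h
  obtain ⟨ε, hε, hleft⟩ := Metric.eventually_nhds_iff.mp hsq.eventually_left_inverse
  obtain ⟨μ, hμ, hsub⟩ := hS₀.exists_posSemidef_sub_smul_one (𝕜 := ℝ)
  have hnear : ∀ᶠ y in 𝓝 x, ‖q y - q x‖ < μ * ε := by
    simpa only [dist_eq_norm] using
      hqx.continuousAt.eventually (Metric.ball_mem_nhds _ (by positivity))
  have heq : (fun y => (hq y).sqrt) =ᶠ[𝓝 x] f ∘ q := by
    filter_upwards [hnear] with y hy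
    have hdist : dist (hq y).sqrt S₀ < ε := by
      rw [dist_eq_norm]
      exact lt_of_mul_lt_mul_left
        (((hq x).mul_norm_sqrt_sub_sqrt_le (hq y) hsub).trans_lt hy) hμ.le
    exact (hleft hdist).symm.trans (congrArg f (hq y).sqrt_mul_self)
  exact (hf.comp x hqx).congr_of_eventuallyEq heq

namespace Matrix

theorem isBilinearMap_transpose_mul_mul {n k : Type*} [Fintype n] (G : Matrix n n ℝ) :
    IsBilinearMap ℝ fun A B : Matrix n k ℝ => Aᵀ * G * B where
  add_left _ _ _ := by rw [transpose_add, Matrix.add_mul, Matrix.add_mul]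
  smul_left _ _ _ := by rw [transpose_smul, Matrix.smul_mul, Matrix.smul_mul]
  add_right _ _ _ := Matrix.mul_add _ _ _
  smul_right _ _ _ := Matrix.mul_smul _ _ _

theorem exists_hasFDerivAt_transpose_mul_mul {n k : Type*} [Fintype n] [Fintype k]
    (G : Matrix n n ℝ) (H : Matrix n k ℝ) :
    ∃ q' : Matrix n k ℝ →L[ℝ] Matrix k k ℝ, HasFDerivAt (fun X => Xᵀ * G * X) q' H ∧
      ∀ M, q' M = Hᵀ * G * M + Mᵀ * G * H :=
  ⟨_, (isBilinearMap_transpose_mul_mul G).toContinuousBilinearMap.hasFDerivAt_of_bilinear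
    (hasFDerivAt_id H) (hasFDerivAt_id H), fun _ => rfl⟩

end Matrix

/-- If `Hᵀ G H` is positive definite, `π` is (Fréchet) differentiable at `H`, and its
derivative applied to `M` is `Tr(Mᵀ G H (Hᵀ G H)^{-1/2})`, i.e. the gradient of `π` at `H`
w.r.t. the Frobenius inner product is `G H (Hᵀ G H)^{-1/2}`. -/
theorem piObj_differentiableAt {n s : ℕ} {G : Matrix (Fin n) (Fin n) ℝ} (hG : G.PosDef)
    (H : Matrix (Fin n) (Fin s) ℝ) (hH : (Hᵀ * G * H).PosDef) :
    DifferentiableAt ℝ (piObj G hG.posSemidef) H ∧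
      ∀ M : Matrix (Fin n) (Fin s) ℝ,
        fderiv ℝ (piObj G hG.posSemidef) H M =
          (Mᵀ * (G * H * ((transposeMulMul_posSemidef hG.posSemidef H).sqrt)⁻¹)).trace := by
  obtain ⟨q', hq', hq'_apply⟩ := Matrix.exists_hasFDerivAt_transpose_mul_mul G H
  have hpi : HasFDerivAt (piObj G hG.posSemidef) _ H :=
    (Matrix.traceLinearMap (Fin s) ℝ ℝ).toContinuousLinearMap.hasFDerivAt.comp H
      (hq'.posSemidef_sqrt (transposeMulMul_posSemidef hG.posSemidef) hH)
  refine ⟨hpi.differentiableAt, fun M => ?_⟩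
  set S₀ := (transposeMulMul_posSemidef hG.posSemidef H).sqrt
  have hS₀ : S₀.PosDef := hH.posDef_sqrt
  have hW : (S₀⁻¹)ᵀ = S₀⁻¹ := by
    rw [Matrix.transpose_nonsing_inv, ← Matrix.conjTranspose_eq_transpose_of_trivial, hS₀.1.eq]
  have hGH : (Mᵀ * G * H)ᵀ = Hᵀ * G * M := by
    rw [Matrix.transpose_mul, Matrix.transpose_mul, Matrix.transpose_transpose,
      ← Matrix.conjTranspose_eq_transpose_of_trivial G, hG.1.eq, Matrix.mul_assoc]
  rw [hpi.fderiv]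
  refine mul_left_cancel₀ two_ne_zero ?_
  calc 2 * _ = (S₀⁻¹ * ((Mᵀ * G * H)ᵀ + Mᵀ * G * H)).trace := by
        rw [hGH, ← hq'_apply]
        exact hS₀.two_mul_trace_lyapunovEquiv_symm _
    _ = 2 * (Mᵀ * (G * H * S₀⁻¹)).trace := by
        rw [Matrix.trace_mul_transpose_add_self hW, Matrix.trace_mul_comm]
        simp only [Matrix.mul_assoc]
end

section
/- Let 𝓗 be a real Hilbert space, v₁,…,vₙ ∈ 𝓗 with positive definite Gram matrix G ∈ ℝ^{n×n}, G_{ij} = ⟨vᵢ, vⱼ⟩, and let s ≤ n. Then the supremum of (1/2) Σ_{i=1}^n Σ_{j=1}^s ⟨vᵢ, wⱼ⟩² over all W = (w₁,…,wₛ) ∈ 𝓗ˢ with Gram matrix 𝒢(W) ⪯ I_s equals (1/2) Σ_{i=1}^s λᵢ(G), where λ₁(G) ≥ … ≥ λₙ(G) are the eigenvalues of G ordered decreasingly. (This is the optimal value of the kernel PCA variance-maximization problem with s components.) -/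
/-!
Diagonalise the Gram matrix: with `fᵢ = Σₖ uᵢₖ vₖ` one has `⟪fᵢ, fⱼ⟫ = λᵢ δᵢⱼ`, so `eᵢ = fᵢ / ‖fᵢ‖`
is orthonormal, and since `(uᵢₖ)` is an orthogonal matrix,
`Σₖ ⟪vₖ, w⟫² = Σᵢ ⟪fᵢ, w⟫² = Σᵢ λᵢ ⟪eᵢ, w⟫²`. For a feasible `W` the weights
`tᵢ = Σⱼ ⟪eᵢ, wⱼ⟫²` lie in `[0, 1]`, because `𝒢(W) ⪯ I` makes `x ↦ Σⱼ xⱼ wⱼ` a contraction, and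
sum to at most `s` by Bessel's inequality and `‖wⱼ‖ ≤ 1`. A weighted sum `Σᵢ λᵢ tᵢ` with such
weights is at most the sum of the `s` largest `λᵢ`, and `W = (e₁, …, eₛ)` attains it.
-/

open scoped RealInnerProductSpace Matrix

section Rearrangement

open Finset

theorem Finset.sum_mul_le_sum_of_threshold {ι : Type*} [Fintype ι] [DecidableEq ι]
    (S : Finset ι) {lam t : ι → ℝ} {c : ℝ} (hc : 0 ≤ c) (hS : ∀ i ∈ S, c ≤ lam i)
    (hSc : ∀ i ∉ S, lam i ≤ c) (ht0 : ∀ i, 0 ≤ t i) (ht1 : ∀ i, t i ≤ 1)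
    (hts : ∑ i, t i ≤ #S) :
    ∑ i, lam i * t i ≤ ∑ i ∈ S, lam i := by
  have hpoint : ∀ i, lam i * t i ≤
      (if i ∈ S then lam i else 0) + c * (t i - if i ∈ S then 1 else 0) := by
    intro i
    by_cases hi : i ∈ S
    · simp only [if_pos hi]; nlinarith [hS i hi, ht1 i]
    · simp only [if_neg hi]; nlinarith [hSc i hi, ht0 i]
  calc ∑ i, lam i * t i
      ≤ ∑ i, ((if i ∈ S then lam i else 0) + c * (t i - if i ∈ S then 1 else 0)) :=
        sum_le_sum fun i _ => hpoint i
    _ = ∑ i ∈ S, lam i + c * (∑ i, t i - #S) := by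
        simp [sum_add_distrib, ← mul_sum, sum_sub_distrib, sum_ite_mem]
    _ ≤ ∑ i ∈ S, lam i := by nlinarith

theorem Antitone.sum_mul_le_sum_castLE {n s : ℕ} (hs : s ≤ n) {lam t : Fin n → ℝ}
    (hlam : Antitone lam) (hlam0 : ∀ i, 0 ≤ lam i) (ht0 : ∀ i, 0 ≤ t i)
    (ht1 : ∀ i, t i ≤ 1) (hts : ∑ i, t i ≤ s) :
    ∑ i, lam i * t i ≤ ∑ j : Fin s, lam (Fin.castLE hs j) := by
  obtain rfl | hs0 := s.eq_zero_or_pos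
  · have ht : ∀ i, t i = 0 := fun i => (sum_eq_zero_iff_of_nonneg fun i _ => ht0 i).1
      (le_antisymm (by simpa using hts) (sum_nonneg fun i _ => ht0 i)) i (mem_univ i)
    simp [ht]
  have hmem : ∀ i, i ∈ univ.map (Fin.castLEEmb hs) ↔ (i : ℕ) < s := by
    simp [← Set.mem_range (f := Fin.castLE hs), Fin.range_castLE]
  rw [show ∑ j : Fin s, lam (Fin.castLE hs j) = ∑ i ∈ univ.map (Fin.castLEEmb hs), lam i by
    simp]
  refine sum_mul_le_sum_of_threshold _ (c := lam ⟨s - 1, by omega⟩) (hlam0 _)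
    (fun i hi => hlam ?_) (fun i hi => hlam ?_) ht0 ht1 (by simpa using hts)
  all_goals rw [hmem] at hi; rw [Fin.le_def]; simp only; omega

end Rearrangement

section GramMatrix

open Finset

variable {E : Type*} [NormedAddCommGroup E] [InnerProductSpace ℝ E]

section Contraction

variable {ι : Type*} [DecidableEq ι] {W : ι → E}

theorem Matrix.norm_sum_smul_sq_le_of_posSemidef_one_sub_gram [Fintype ι]
    (hW : (1 - Matrix.gram ℝ W).PosSemidef) (x : ι → ℝ) :
    ‖∑ j, x j • W j‖ ^ 2 ≤ ∑ j, x j ^ 2 := by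
  have h := hW.dotProduct_mulVec_nonneg x
  rw [Matrix.sub_mulVec, dotProduct_sub, Matrix.one_mulVec, Matrix.star_dotProduct_gram_mulVec,
    real_inner_self_eq_norm_sq, star_trivial] at h
  simpa [dotProduct, sq] using h

theorem Matrix.sum_inner_sq_le_one_of_posSemidef_one_sub_gram [Fintype ι]
    (hW : (1 - Matrix.gram ℝ W).PosSemidef) {y : E} (hy : ‖y‖ ≤ 1) :
    ∑ j, ⟪y, W j⟫ ^ 2 ≤ 1 := by
  set S := ∑ j, ⟪y, W j⟫ ^ 2
  set z := ∑ j, ⟪y, W j⟫ • W j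
  have hSz : S = ⟪y, z⟫ := by simp [S, z, inner_sum, real_inner_smul_right, sq]
  have hS : S ≤ ‖z‖ :=
    hSz ▸ (real_inner_le_norm y z).trans (mul_le_of_le_one_left (norm_nonneg z) hy)
  have hz : ‖z‖ ^ 2 ≤ S := norm_sum_smul_sq_le_of_posSemidef_one_sub_gram hW _
  nlinarith [sum_nonneg fun j (_ : j ∈ univ) => sq_nonneg ⟪y, W j⟫]

theorem Matrix.norm_sq_le_one_of_posSemidef_one_sub_gram
    (hW : (1 - Matrix.gram ℝ W).PosSemidef) (j : ι) : ‖W j‖ ^ 2 ≤ 1 := by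
  have h := hW.diag_nonneg (i := j)
  rw [Matrix.sub_apply, Matrix.one_apply_eq, Matrix.gram_apply, real_inner_self_eq_norm_sq] at h
  linarith

theorem Orthonormal.sum_sum_inner_sq_le_card [Fintype ι] {κ : Type*} [Fintype κ] {e : κ → E}
    (he : Orthonormal ℝ e) (hW : (1 - Matrix.gram ℝ W).PosSemidef) :
    ∑ i, ∑ j, ⟪e i, W j⟫ ^ 2 ≤ Fintype.card ι := by
  rw [sum_comm, Fintype.card_eq_sum_ones, Nat.cast_sum, Nat.cast_one]
  refine sum_le_sum fun j _ => le_trans ?_ (Matrix.norm_sq_le_one_of_posSemidef_one_sub_gram hW j)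
  simpa [Real.norm_eq_abs, sq_abs] using he.sum_inner_products_le (W j) (s := univ)

end Contraction

theorem Orthonormal.sum_mul_sum_inner_sq_le_sum_castLE {n s : ℕ} (hs : s ≤ n)
    {e : Fin n → E} (he : Orthonormal ℝ e) {lam : Fin n → ℝ} (hlam : Antitone lam)
    (hlam0 : ∀ i, 0 ≤ lam i) {W : Fin s → E} (hW : (1 - Matrix.gram ℝ W).PosSemidef) :
    ∑ i, lam i * ∑ j, ⟪e i, W j⟫ ^ 2 ≤ ∑ j : Fin s, lam (Fin.castLE hs j) :=
  hlam.sum_mul_le_sum_castLE hs hlam0 (fun _ => sum_nonneg fun _ _ => sq_nonneg _)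
    (fun i => Matrix.sum_inner_sq_le_one_of_posSemidef_one_sub_gram hW (he.1 i).le)
    (by simpa using he.sum_sum_inner_sq_le_card hW)

theorem Matrix.PosDef.pos_of_mulVec_eq_smul {ι : Type*} [Fintype ι] {A : Matrix ι ι ℝ}
    (hA : A.PosDef) {u : ι → ℝ} {μ : ℝ} (hu : u ⬝ᵥ u = 1) (h : A *ᵥ u = μ • u) : 0 < μ := by
  have hu0 : u ≠ 0 := by rintro rfl; simp at hu
  simpa [h, hu] using hA.dotProduct_mulVec_pos hu0

theorem Matrix.dotProduct_mulVec_self_eq {ι : Type*} [Fintype ι] [DecidableEq ι]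
    {U : Matrix ι ι ℝ} (hU : Uᵀ * U = 1) (a : ι → ℝ) : U *ᵥ a ⬝ᵥ U *ᵥ a = a ⬝ᵥ a := by
  rw [Matrix.dotProduct_mulVec, ← Matrix.vecMul_transpose, Matrix.vecMul_vecMul, hU,
    Matrix.vecMul_one]

theorem exists_orthonormal_inner_sq_eq_mul {ι : Type*} [DecidableEq ι] {f : ι → E}
    {lam : ι → ℝ} (hf : ∀ i j, ⟪f i, f j⟫ = if i = j then lam i else 0)
    (hlam : ∀ i, 0 < lam i) :
    ∃ e : ι → E, Orthonormal ℝ e ∧ ∀ i w, ⟪f i, w⟫ ^ 2 = lam i * ⟪e i, w⟫ ^ 2 := by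
  have hnorm : ∀ i, ‖f i‖ ^ 2 = lam i := fun i => by
    rw [← real_inner_self_eq_norm_sq, hf, if_pos rfl]
  have hf0 : ∀ i, ‖f i‖ ^ 2 ≠ 0 := fun i => hnorm i ▸ (hlam i).ne'
  refine ⟨fun i => ‖f i‖⁻¹ • f i, orthonormal_iff_ite.2 fun i j => ?_, fun i w => ?_⟩
  · rw [real_inner_smul_left, real_inner_smul_right, hf]
    split_ifs with hij
    · subst hij
      rw [← hnorm, ← mul_assoc, ← sq, inv_pow, inv_mul_cancel₀ (hf0 i)]
    · simp
  · rw [real_inner_smul_left, ← hnorm, mul_pow, inv_pow, mul_inv_cancel_left₀ (hf0 i)]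

section Spectral

variable {ι : Type*} [Fintype ι] [DecidableEq ι] {v : ι → E} {u : ι → ι → ℝ} {lam : ι → ℝ}

theorem Matrix.transpose_mul_self_eq_one_of_orthonormal_rows
    (horth : ∀ i k, u i ⬝ᵥ u k = if i = k then (1 : ℝ) else 0) :
    (Matrix.of u)ᵀ * Matrix.of u = 1 :=
  mul_eq_one_comm.1 <| Matrix.ext fun i k => (Matrix.mul_apply' ..).trans (horth i k)

theorem inner_sum_smul_eq_ite_of_orthonormal_eigenvectors
    (horth : ∀ i k, u i ⬝ᵥ u k = if i = k then (1 : ℝ) else 0)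
    (heig : ∀ i, Matrix.gram ℝ v *ᵥ u i = lam i • u i) (i j : ι) :
    ⟪∑ k, u i k • v k, ∑ k, u j k • v k⟫ = if i = j then lam i else 0 := by
  rw [← Matrix.star_dotProduct_gram_mulVec, star_trivial, heig, dotProduct_smul, horth]
  split_ifs with hij
  · simp [hij]
  · simp

theorem exists_orthonormal_sum_inner_sq_eq (hG : (Matrix.gram ℝ v).PosDef)
    (horth : ∀ i k, u i ⬝ᵥ u k = if i = k then (1 : ℝ) else 0)
    (heig : ∀ i, Matrix.gram ℝ v *ᵥ u i = lam i • u i) :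
    ∃ e : ι → E, Orthonormal ℝ e ∧ ∀ w, ∑ k, ⟪v k, w⟫ ^ 2 = ∑ i, lam i * ⟪e i, w⟫ ^ 2 := by
  have hlam i : 0 < lam i := hG.pos_of_mulVec_eq_smul (by simpa using horth i i) (heig i)
  obtain ⟨e, he, hfe⟩ :=
    exists_orthonormal_inner_sq_eq_mul
      (inner_sum_smul_eq_ite_of_orthonormal_eigenvectors horth heig) hlam
  refine ⟨e, he, fun w => ?_⟩
  have hf i : ⟪∑ k, u i k • v k, w⟫ = (Matrix.of u *ᵥ fun k => ⟪v k, w⟫) i := by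
    simp [sum_inner, real_inner_smul_left, Matrix.mulVec, dotProduct]
  simp_rw [← hfe, hf]
  simpa [dotProduct, sq] using (Matrix.dotProduct_mulVec_self_eq
    (Matrix.transpose_mul_self_eq_one_of_orthonormal_rows horth) fun k => ⟪v k, w⟫).symm

end Spectral

end GramMatrix

/-- Optimal value of the KPCA variance-maximization problem:
`sup { (1/2) Σᵢⱼ ⟨vᵢ, wⱼ⟩² : 𝒢(W) ⪯ Iₛ } = (1/2) Σ_{i=1}^s λᵢ(G)`, where the `λᵢ(G)` are
the decreasingly ordered eigenvalues of the Gram matrix `G` of `v₁, …, vₙ`. -/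
theorem kpca_optimal_value
    {𝓗 : Type*} [NormedAddCommGroup 𝓗] [InnerProductSpace ℝ 𝓗]
    {n s : ℕ} (hs : s ≤ n) (v : Fin n → 𝓗)
    (G : Matrix (Fin n) (Fin n) ℝ) (hGdef : G = Matrix.of fun i j => ⟪v i, v j⟫)
    (hG : G.PosDef)
    (u : Fin n → (Fin n → ℝ)) (lam : Fin n → ℝ)
    (horth : ∀ i k : Fin n, u i ⬝ᵥ u k = if i = k then (1 : ℝ) else 0)
    (heig : ∀ i : Fin n, G *ᵥ u i = lam i • u i)
    (hdec : Antitone lam) :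
    (⨆ W : {W : Fin s → 𝓗 // ((1 : Matrix (Fin s) (Fin s) ℝ) - gram W).PosSemidef},
        (1 / 2) * ∑ i : Fin n, ∑ j : Fin s, (⟪v i, (W : Fin s → 𝓗) j⟫ : ℝ) ^ 2)
      = (1 / 2) * ∑ j : Fin s, lam (Fin.castLE hs j) := by
  subst hGdef
  obtain ⟨e, he, hvw⟩ := exists_orthonormal_sum_inner_sq_eq hG horth heig
  have hlam0 i : 0 ≤ lam i := (hG.pos_of_mulVec_eq_smul (by simpa using horth i i) (heig i)).le
  have hobj (W : Fin s → 𝓗) :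
      ∑ i, ∑ j, ⟪v i, W j⟫ ^ 2 = ∑ i, lam i * ∑ j, ⟪e i, W j⟫ ^ 2 := by
    rw [Finset.sum_comm]
    simp_rw [hvw, Finset.mul_sum]
    exact Finset.sum_comm
  have hW₀ : ((1 : Matrix (Fin s) (Fin s) ℝ) - gram (e ∘ Fin.castLE hs)).PosSemidef := by
    rw [show gram (e ∘ Fin.castLE hs) = 1 from
      Matrix.gram_eq_one_iff_orthonormal.2 (he.comp _ (Fin.castLE_injective hs)), sub_self]
    exact .zero
  refine IsGreatest.csSup_eq ⟨⟨⟨_, hW₀⟩, ?_⟩, ?_⟩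
  · simp only [hobj, Finset.mul_sum]
    rw [Finset.sum_comm]
    simp [orthonormal_iff_ite.1 he]
  · rintro _ ⟨W, rfl⟩
    simp only [hobj]
    gcongr
    exact he.sum_mul_sum_inner_sq_le_sum_castLE hs hdec hlam0 W.2
end
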